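/- arXiv:1907.10351 — 5 statements merged into one kernel-verified Lean document; each statement's English description precedes it below -/
import Mathlib

section
/- Let n ≥ 1, let M, K ∈ ℝ^{n×n} be skew-symmetric matrices, let S : ℝⁿ → ℝ be continuously differentiable, and let z : ℝ² → ℝⁿ be twice continuously differentiable (arguments written z(x,t)) and satisfy M ∂ₜz(x,t) + K ∂ₓz(x,t) = ∇S(z(x,t)) for all (x,t) ∈ ℝ². Define the energy density E(x,t) = S(z(x,t)) − ½⟨z(x,t), K ∂ₓz(x,t)⟩ and the energy flux F(x,t) = ½⟨z(x,t), K ∂ₜz(x,t)⟩. Then the energy conservation law ∂ₜE(x,t) + ∂ₓF(x,t) = 0 holds for all (x,t) ∈ ℝ². -/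
/-!
Differentiating `E` in `t` and `F` in `x`, the terms `½⟨z, K ∂ₓ∂ₜz⟩` cancel by symmetry of
mixed partials. Skew-symmetry of `K` turns the remaining terms into
`⟨∇S(z), ∂ₜz⟩ - ⟨∂ₜz, K ∂ₓz⟩`, and pairing the PDE with `∂ₜz` shows that this vanishes,
because `⟨M ∂ₜz, ∂ₜz⟩ = 0` by skew-symmetry of `M`.
-/

open scoped RealInnerProductSpace
open Matrix WithLp

section SkewSymmetric

variable {ι : Type*} [Fintype ι] {A : Matrix ι ι ℝ}

lemma inner_toLp_mulVec_of_transpose_eq_neg (hA : Aᵀ = -A) (u v : EuclideanSpace ℝ ι) :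
    ⟪u, toLp 2 (A *ᵥ ofLp v)⟫ = -⟪v, toLp 2 (A *ᵥ ofLp u)⟫ := by
  simp only [EuclideanSpace.inner_eq_star_dotProduct, star_trivial]
  rw [dotProduct_comm, dotProduct_mulVec, ← mulVec_transpose, hA, neg_mulVec, neg_dotProduct]

lemma inner_toLp_mulVec_self_of_transpose_eq_neg (hA : Aᵀ = -A) (v : EuclideanSpace ℝ ι) :
    ⟪v, toLp 2 (A *ᵥ ofLp v)⟫ = 0 := by
  linarith [inner_toLp_mulVec_of_transpose_eq_neg hA v v]

end SkewSymmetric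

lemma HasDerivAt.inner_toLp_mulVec {ι : Type*} [Fintype ι] [DecidableEq ι] (A : Matrix ι ι ℝ)
    {u v : ℝ → EuclideanSpace ℝ ι} {u' v' : EuclideanSpace ℝ ι} {t : ℝ}
    (hu : HasDerivAt u u' t) (hv : HasDerivAt v v' t) :
    HasDerivAt (fun s => ⟪u s, toLp 2 (A *ᵥ ofLp (v s))⟫)
      (⟪u t, toLp 2 (A *ᵥ ofLp v')⟫ + ⟪u', toLp 2 (A *ᵥ ofLp (v t))⟫) t :=
  hu.inner ℝ ((toEuclideanCLM (𝕜 := ℝ) A).hasFDerivAt.comp_hasDerivAt t hv)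

section PartialDerivatives

variable {F : Type*} [NormedAddCommGroup F] [NormedSpace ℝ F]

lemma HasFDerivAt.hasDerivAt_partial_fst {g : ℝ × ℝ → F} {g' : ℝ × ℝ →L[ℝ] F} {x t : ℝ}
    (hg : HasFDerivAt g g' (x, t)) : HasDerivAt (fun y => g (y, t)) (g' (1, 0)) x :=
  hg.comp_hasDerivAt x ((hasDerivAt_id x).prodMk (hasDerivAt_const x t))

lemma HasFDerivAt.hasDerivAt_partial_snd {g : ℝ × ℝ → F} {g' : ℝ × ℝ →L[ℝ] F} {x t : ℝ}
    (hg : HasFDerivAt g g' (x, t)) : HasDerivAt (fun s => g (x, s)) (g' (0, 1)) t :=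
  hg.comp_hasDerivAt t ((hasDerivAt_const t x).prodMk (hasDerivAt_id t))

lemma exists_hasDerivAt_deriv_partial_comm {z : ℝ → ℝ → F}
    (hz : ContDiff ℝ 2 (Function.uncurry z)) (x t : ℝ) :
    ∃ w : F, HasDerivAt (fun s => deriv (fun y => z y s) x) w t ∧
      HasDerivAt (fun y => deriv (fun s => z y s) t) w x := by
  set f' := fderiv ℝ (Function.uncurry z)
  have hzd : ∀ p, HasFDerivAt (Function.uncurry z) (f' p) p := fun p =>
    ((hz.differentiable (by norm_num)) p).hasFDerivAt
  have hf' : HasFDerivAt f' (fderiv ℝ f' (x, t)) (x, t) :=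
    ((hz.fderiv_right (m := 1) (by norm_num)).differentiable one_ne_zero (x, t)).hasFDerivAt
  have hdx : (fun s => deriv (fun y => z y s) x) = fun s => f' (x, s) (1, 0) :=
    funext fun s => (hzd (x, s)).hasDerivAt_partial_fst.deriv
  have hdt : (fun y => deriv (fun s => z y s) t) = fun y => f' (y, t) (0, 1) :=
    funext fun y => (hzd (y, t)).hasDerivAt_partial_snd.deriv
  refine ⟨fderiv ℝ f' (x, t) (0, 1) (1, 0), ?_, ?_⟩
  · rw [hdx]
    simpa using hf'.hasDerivAt_partial_snd.clm_apply (hasDerivAt_const t (1, 0))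
  · rw [hdt, second_derivative_symmetric hzd hf']
    simpa using hf'.hasDerivAt_partial_fst.clm_apply (hasDerivAt_const x (0, 1))

end PartialDerivatives

theorem stmt0_general (n : ℕ)
    (M K : Matrix (Fin n) (Fin n) ℝ)
    (hM : Mᵀ = -M) (hK : Kᵀ = -K)
    (S : EuclideanSpace ℝ (Fin n) → ℝ) (hS : ContDiff ℝ 1 S)
    (z : ℝ → ℝ → EuclideanSpace ℝ (Fin n))
    (hz : ContDiff ℝ 2 (Function.uncurry z))
    (hpde : ∀ x t : ℝ,
      (WithLp.toLp 2 (M.mulVec (WithLp.ofLp (deriv (fun s => z x s) t))) : EuclideanSpace ℝ (Fin n))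
        + (WithLp.toLp 2 (K.mulVec (WithLp.ofLp (deriv (fun y => z y t) x))) : EuclideanSpace ℝ (Fin n))
        = gradient S (z x t))
    (E F : ℝ → ℝ → ℝ)
    (hE : ∀ x t : ℝ, E x t = S (z x t)
      - (1 / 2) * ⟪z x t, (WithLp.toLp 2 (K.mulVec (WithLp.ofLp (deriv (fun y => z y t) x))) : EuclideanSpace ℝ (Fin n))⟫)
    (hF : ∀ x t : ℝ, F x t =
      (1 / 2) * ⟪z x t, (WithLp.toLp 2 (K.mulVec (WithLp.ofLp (deriv (fun s => z x s) t))) : EuclideanSpace ℝ (Fin n))⟫) :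
    ∀ x t : ℝ, deriv (fun s => E x s) t + deriv (fun y => F y t) x = 0 := by
  intro x t
  have hzd : ∀ p, HasFDerivAt (Function.uncurry z) _ p := fun p =>
    ((hz.differentiable (by norm_num)) p).hasFDerivAt
  have hzt : HasDerivAt (fun s => z x s) (deriv (fun s => z x s) t) t :=
    (hzd (x, t)).hasDerivAt_partial_snd.differentiableAt.hasDerivAt
  have hzx : HasDerivAt (fun y => z y t) (deriv (fun y => z y t) x) x :=
    (hzd (x, t)).hasDerivAt_partial_fst.differentiableAt.hasDerivAt
  obtain ⟨w, hwt, hwx⟩ := exists_hasDerivAt_deriv_partial_comm hz x t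
  have hSz : HasDerivAt (fun s => S (z x s)) ⟪gradient S (z x t), deriv (fun s => z x s) t⟫ t :=
    ((hS.differentiable one_ne_zero _).hasGradientAt.hasFDerivAt.comp_hasDerivAt t hzt :)
  have hEt := hSz.fun_sub ((hzt.inner_toLp_mulVec K hwt).const_mul (1 / 2))
  have hFx := (hzx.inner_toLp_mulVec K hwx).const_mul (1 / 2)
  have hgrad : ⟪gradient S (z x t), deriv (fun s => z x s) t⟫ =
      ⟪deriv (fun s => z x s) t, toLp 2 (K *ᵥ ofLp (deriv (fun y => z y t) x))⟫ := by
    rw [← hpde x t, inner_add_left, real_inner_comm _ (toLp 2 (M *ᵥ _)),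
      inner_toLp_mulVec_self_of_transpose_eq_neg hM, zero_add, real_inner_comm]
  simp only [hE, hF]
  rw [hEt.deriv, hFx.deriv, hgrad, inner_toLp_mulVec_of_transpose_eq_neg hK]
  ring

/-- **Energy conservation law for Hamiltonian PDEs.**
For the Hamiltonian PDE `M ∂ₜz + K ∂ₓz = ∇S(z)` with skew-symmetric `M, K`,
the energy density `E = S(z) - ½⟨z, K ∂ₓz⟩` and energy flux `F = ½⟨z, K ∂ₜz⟩`
satisfy `∂ₜE + ∂ₓF = 0`. -/
theorem stmt0 (n : ℕ) (hn : 1 ≤ n)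
    (M K : Matrix (Fin n) (Fin n) ℝ)
    (hM : Mᵀ = -M) (hK : Kᵀ = -K)
    (S : EuclideanSpace ℝ (Fin n) → ℝ) (hS : ContDiff ℝ 1 S)
    (z : ℝ → ℝ → EuclideanSpace ℝ (Fin n))
    (hz : ContDiff ℝ 2 (Function.uncurry z))
    (hpde : ∀ x t : ℝ,
      (WithLp.toLp 2 (M.mulVec (WithLp.ofLp (deriv (fun s => z x s) t))) : EuclideanSpace ℝ (Fin n))
        + (WithLp.toLp 2 (K.mulVec (WithLp.ofLp (deriv (fun y => z y t) x))) : EuclideanSpace ℝ (Fin n))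
        = gradient S (z x t))
    (E F : ℝ → ℝ → ℝ)
    (hE : ∀ x t : ℝ, E x t = S (z x t)
      - (1 / 2) * ⟪z x t, (WithLp.toLp 2 (K.mulVec (WithLp.ofLp (deriv (fun y => z y t) x))) : EuclideanSpace ℝ (Fin n))⟫)
    (hF : ∀ x t : ℝ, F x t =
      (1 / 2) * ⟪z x t, (WithLp.toLp 2 (K.mulVec (WithLp.ofLp (deriv (fun s => z x s) t))) : EuclideanSpace ℝ (Fin n))⟫) :
    ∀ x t : ℝ, deriv (fun s => E x s) t + deriv (fun y => F y t) x = 0 :=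
  stmt0_general n M K hM hK S hS z hz hpde E F hE hF
end

section
/- Let n ≥ 1, let M, K ∈ ℝ^{n×n} be skew-symmetric matrices, let S : ℝⁿ → ℝ be continuously differentiable, and let z : ℝ² → ℝⁿ be twice continuously differentiable and satisfy M ∂ₜz(x,t) + K ∂ₓz(x,t) = ∇S(z(x,t)) for all (x,t) ∈ ℝ². Define the momentum density I(x,t) = ½⟨z(x,t), M ∂ₓz(x,t)⟩ and the momentum flux G(x,t) = S(z(x,t)) − ½⟨z(x,t), M ∂ₜz(x,t)⟩. Then the momentum conservation law ∂ₜI(x,t) + ∂ₓG(x,t) = 0 holds for all (x,t) ∈ ℝ². -/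
/-!
Differentiate `I` in `t` and `G` in `x`. The terms with a second derivative of `z` are
`½⟪z, M ∂ₜ∂ₓz⟫` and `-½⟪z, M ∂ₓ∂ₜz⟫`, which cancel by symmetry of mixed partials. Of what
remains, skew-symmetry of `M` gives `⟪∂ₜz, M ∂ₓz⟫ + ⟪∇S(z), ∂ₓz⟫`, and substituting the PDE
`∇S(z) = M ∂ₜz + K ∂ₓz` turns this into `⟪K ∂ₓz, ∂ₓz⟫ = 0`.
-/

open scoped RealInnerProductSpace
open Matrix Function

section SkewSymmetric

variable {ι : Type*} [Fintype ι] [DecidableEq ι] {M : Matrix ι ι ℝ}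

theorem Matrix.inner_toEuclideanCLM_of_transpose_eq_neg (hM : Mᵀ = -M)
    (u v : EuclideanSpace ℝ ι) :
    ⟪u, toEuclideanCLM (𝕜 := ℝ) M v⟫ = -⟪v, toEuclideanCLM (𝕜 := ℝ) M u⟫ := by
  have h : WithLp.ofLp u ⬝ᵥ M *ᵥ WithLp.ofLp v = -(WithLp.ofLp v ⬝ᵥ M *ᵥ WithLp.ofLp u) := by
    rw [dotProduct_mulVec, ← mulVec_transpose, hM, neg_mulVec, neg_dotProduct, dotProduct_comm]
  simpa [PiLp.inner_apply, dotProduct, mul_comm] using h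

theorem Matrix.inner_self_toEuclideanCLM_of_transpose_eq_neg (hM : Mᵀ = -M)
    (v : EuclideanSpace ℝ ι) : ⟪v, toEuclideanCLM (𝕜 := ℝ) M v⟫ = 0 := by
  linarith [inner_toEuclideanCLM_of_transpose_eq_neg hM v v]

end SkewSymmetric

section PartialDerivatives

variable {𝕜 : Type*} [NontriviallyNormedField 𝕜] {E : Type*} [NormedAddCommGroup E]
  [NormedSpace 𝕜 E] {f : 𝕜 → 𝕜 → E} {f' : 𝕜 × 𝕜 →L[𝕜] E} {x t : 𝕜}

theorem HasFDerivAt.hasDerivAt_uncurry_fst (h : HasFDerivAt (uncurry f) f' (x, t)) :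
    HasDerivAt (fun y => f y t) (f' (1, 0)) x :=
  h.comp_hasDerivAt (f := fun y => (y, t)) x ((hasDerivAt_id' x).prodMk (hasDerivAt_const x t))

theorem HasFDerivAt.hasDerivAt_uncurry_snd (h : HasFDerivAt (uncurry f) f' (x, t)) :
    HasDerivAt (fun s => f x s) (f' (0, 1)) t :=
  h.comp_hasDerivAt (f := fun s => (x, s)) t ((hasDerivAt_const t x).prodMk (hasDerivAt_id' t))

end PartialDerivatives

theorem ContDiff.exists_hasDerivAt_deriv_deriv_comm {E : Type*} [NormedAddCommGroup E]
    [NormedSpace ℝ E] {f : ℝ → ℝ → E} (hf : ContDiff ℝ 2 (uncurry f)) (x t : ℝ) :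
    ∃ c, HasDerivAt (fun s => deriv (fun y => f y s) x) c t ∧
      HasDerivAt (fun y => deriv (fun s => f y s) t) c x := by
  set F := fderiv ℝ (uncurry f)
  have hf' : ∀ p, HasFDerivAt (uncurry f) (F p) p := fun p =>
    ((hf.differentiable (by norm_num)) p).hasFDerivAt
  have hF : HasFDerivAt F (fderiv ℝ F (x, t)) (x, t) :=
    ((hf.fderiv_right (m := 1) (by norm_num)).differentiable one_ne_zero (x, t)).hasFDerivAt
  have hpartial_fst : ∀ s, deriv (fun y => f y s) x = F (x, s) (1, 0) := fun s =>
    (hf' (x, s)).hasDerivAt_uncurry_fst.deriv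
  have hpartial_snd : ∀ y, deriv (fun s => f y s) t = F (y, t) (0, 1) := fun y =>
    (hf' (y, t)).hasDerivAt_uncurry_snd.deriv
  refine ⟨fderiv ℝ F (x, t) (0, 1) (1, 0), ?_, ?_⟩
  · simp only [hpartial_fst]
    exact (ContinuousLinearMap.apply ℝ E ((1 : ℝ), (0 : ℝ))).hasFDerivAt.comp_hasDerivAt t
      (hF.hasDerivAt_uncurry_snd (f := curry F))
  · simp only [hpartial_snd]
    rw [second_derivative_symmetric hf' hF]
    exact (ContinuousLinearMap.apply ℝ E ((0 : ℝ), (1 : ℝ))).hasFDerivAt.comp_hasDerivAt x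
      (hF.hasDerivAt_uncurry_fst (f := curry F))

theorem stmt1_general (n : ℕ)
    (M K : Matrix (Fin n) (Fin n) ℝ)
    (hM : Mᵀ = -M) (hK : Kᵀ = -K)
    (S : EuclideanSpace ℝ (Fin n) → ℝ) (hS : ContDiff ℝ 1 S)
    (z : ℝ → ℝ → EuclideanSpace ℝ (Fin n))
    (hz : ContDiff ℝ 2 (Function.uncurry z))
    (hpde : ∀ x t : ℝ,
      (WithLp.toLp 2 (M.mulVec (WithLp.ofLp (deriv (fun s => z x s) t))) : EuclideanSpace ℝ (Fin n))
        + (WithLp.toLp 2 (K.mulVec (WithLp.ofLp (deriv (fun y => z y t) x))) : EuclideanSpace ℝ (Fin n))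
        = gradient S (z x t))
    (I G : ℝ → ℝ → ℝ)
    (hI : ∀ x t : ℝ, I x t =
      (1 / 2) * ⟪z x t, (WithLp.toLp 2 (M.mulVec (WithLp.ofLp (deriv (fun y => z y t) x))) : EuclideanSpace ℝ (Fin n))⟫)
    (hG : ∀ x t : ℝ, G x t = S (z x t)
      - (1 / 2) * ⟪z x t, (WithLp.toLp 2 (M.mulVec (WithLp.ofLp (deriv (fun s => z x s) t))) : EuclideanSpace ℝ (Fin n))⟫) :
    ∀ x t : ℝ, deriv (fun s => I x s) t + deriv (fun y => G y t) x = 0 := by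
  intro x t
  -- `A v` is definitionally the `toLp (M *ᵥ ofLp v)` of the hypotheses.
  let A := toEuclideanCLM (𝕜 := ℝ) M
  have hzdiff : Differentiable ℝ (uncurry z) := hz.differentiable (by norm_num)
  have hzx := ((hzdiff (x, t)).hasFDerivAt.hasDerivAt_uncurry_fst).differentiableAt.hasDerivAt
  have hzt := ((hzdiff (x, t)).hasFDerivAt.hasDerivAt_uncurry_snd).differentiableAt.hasDerivAt
  set a := deriv (fun s => z x s) t
  set b := deriv (fun y => z y t) x
  obtain ⟨c, hbt, hax⟩ := hz.exists_hasDerivAt_deriv_deriv_comm x t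
  have hIt : HasDerivAt (fun s => I x s) ((1 / 2) * (⟪z x t, A c⟫ + ⟪a, A b⟫)) t := by
    rw [funext (hI x)]
    exact (hzt.inner ℝ (A.hasFDerivAt.comp_hasDerivAt t hbt)).const_mul (1 / 2)
  have hGx : HasDerivAt (fun y => G y t)
      (⟪gradient S (z x t), b⟫ - (1 / 2) * (⟪z x t, A c⟫ + ⟪b, A a⟫)) x := by
    rw [funext fun y => hG y t]
    have hSz := ((hS.differentiable one_ne_zero) (z x t)).hasGradientAt.hasFDerivAt
      |>.comp_hasDerivAt x hzx
    simp only [InnerProductSpace.toDual_apply_apply, comp_def] at hSz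
    exact hSz.sub ((hzx.inner ℝ (A.hasFDerivAt.comp_hasDerivAt x hax)).const_mul (1 / 2))
  have hba : ⟪b, A a⟫ = -⟪a, A b⟫ := inner_toEuclideanCLM_of_transpose_eq_neg hM b a
  have hgrad : ⟪gradient S (z x t), b⟫ = -⟪a, A b⟫ := by
    have hpde' : A a + toEuclideanCLM (𝕜 := ℝ) K b = gradient S (z x t) := hpde x t
    rw [← hpde', inner_add_left, real_inner_comm b, hba, real_inner_comm b,
      inner_self_toEuclideanCLM_of_transpose_eq_neg hK, add_zero]
  rw [hIt.deriv, hGx.deriv, hgrad, hba]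
  ring

/-- **Momentum conservation law for Hamiltonian PDEs.**
For the Hamiltonian PDE `M ∂ₜz + K ∂ₓz = ∇S(z)` with skew-symmetric `M, K`,
the momentum density `I = ½⟨z, M ∂ₓz⟩` and momentum flux `G = S(z) - ½⟨z, M ∂ₜz⟩`
satisfy `∂ₜI + ∂ₓG = 0`. -/
theorem stmt1 (n : ℕ) (hn : 1 ≤ n)
    (M K : Matrix (Fin n) (Fin n) ℝ)
    (hM : Mᵀ = -M) (hK : Kᵀ = -K)
    (S : EuclideanSpace ℝ (Fin n) → ℝ) (hS : ContDiff ℝ 1 S)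
    (z : ℝ → ℝ → EuclideanSpace ℝ (Fin n))
    (hz : ContDiff ℝ 2 (Function.uncurry z))
    (hpde : ∀ x t : ℝ,
      (WithLp.toLp 2 (M.mulVec (WithLp.ofLp (deriv (fun s => z x s) t))) : EuclideanSpace ℝ (Fin n))
        + (WithLp.toLp 2 (K.mulVec (WithLp.ofLp (deriv (fun y => z y t) x))) : EuclideanSpace ℝ (Fin n))
        = gradient S (z x t))
    (I G : ℝ → ℝ → ℝ)
    (hI : ∀ x t : ℝ, I x t =
      (1 / 2) * ⟪z x t, (WithLp.toLp 2 (M.mulVec (WithLp.ofLp (deriv (fun y => z y t) x))) : EuclideanSpace ℝ (Fin n))⟫)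
    (hG : ∀ x t : ℝ, G x t = S (z x t)
      - (1 / 2) * ⟪z x t, (WithLp.toLp 2 (M.mulVec (WithLp.ofLp (deriv (fun s => z x s) t))) : EuclideanSpace ℝ (Fin n))⟫) :
    ∀ x t : ℝ, deriv (fun s => I x s) t + deriv (fun y => G y t) x = 0 :=
  stmt1_general n M K hM hK S hS z hz hpde I G hI hG
end

section
/- Let n ≥ 1, let M, K ∈ ℝ^{n×n} be skew-symmetric matrices, let S : ℝⁿ → ℝ be twice continuously differentiable, and let z : ℝ² → ℝⁿ be continuous. Suppose ζ¹, ζ² : ℝ² → ℝⁿ are continuously differentiable solutions of the variational (linearized) equation M ∂ₜζ(x,t) + K ∂ₓζ(x,t) = ∇²S(z(x,t)) ζ(x,t), where ∇²S denotes the (symmetric) Hessian matrix of S. Then the multi-symplectic conservation law ∂ₜ⟨M ζ¹(x,t), ζ²(x,t)⟩ + ∂ₓ⟨K ζ¹(x,t), ζ²(x,t)⟩ = 0 holds for all (x,t) ∈ ℝ². -/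
/-!
By the product rule, `∂ₜ⟨Mζ¹, ζ²⟩ + ∂ₓ⟨Kζ¹, ζ²⟩` is
`⟨Mζ¹, ∂ₜζ²⟩ + ⟨M∂ₜζ¹, ζ²⟩ + ⟨Kζ¹, ∂ₓζ²⟩ + ⟨K∂ₓζ¹, ζ²⟩`. Skew-symmetry moves `M` and `K` off
`ζ¹` in the first and third terms, and the variational equation regroups the sum as
`⟨Hζ¹, ζ²⟩ - ⟨ζ¹, Hζ²⟩` with `H = ∇²S(z)`, which vanishes because second derivatives commute.
-/

open scoped RealInnerProductSpace
open Matrix InnerProductSpace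

section Calculus

variable {F : Type*} [NormedAddCommGroup F] [NormedSpace ℝ F]

theorem Differentiable.differentiableAt_uncurry_left {f : ℝ → ℝ → F}
    (hf : Differentiable ℝ (Function.uncurry f)) (x t : ℝ) :
    DifferentiableAt ℝ (fun y => f y t) x :=
  (hf.comp (differentiable_id.prodMk (differentiable_const t))).differentiableAt

theorem Differentiable.differentiableAt_uncurry_right {f : ℝ → ℝ → F}
    (hf : Differentiable ℝ (Function.uncurry f)) (x t : ℝ) :
    DifferentiableAt ℝ (fun s => f x s) t :=
  (hf.comp ((differentiable_const x).prodMk differentiable_id)).differentiableAt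

theorem deriv_ofLp {p : ENNReal} [Fact (1 ≤ p)] {ι : Type*} [Fintype ι]
    {f : ℝ → PiLp p (fun _ : ι => ℝ)} {t : ℝ} (hf : DifferentiableAt ℝ f t) :
    deriv (fun s => WithLp.ofLp (f s)) t = WithLp.ofLp (deriv f t) :=
  ((PiLp.hasFDerivAt_ofLp p (f t)).comp_hasDerivAt t hf.hasDerivAt).deriv

end Calculus

section InnerProductSpace

variable {E F : Type*} [NormedAddCommGroup E] [InnerProductSpace ℝ E]
  [NormedAddCommGroup F] [InnerProductSpace ℝ F]

theorem HasDerivAt.inner_clm_apply {f : ℝ → E} {g : ℝ → F} {f' : E} {g' : F} {t : ℝ}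
    (T : E →L[ℝ] F) (hf : HasDerivAt f f' t) (hg : HasDerivAt g g' t) :
    HasDerivAt (fun s => ⟪T (f s), g s⟫) (⟪T (f t), g'⟫ + ⟪T f', g t⟫) t :=
  (T.hasFDerivAt.comp_hasDerivAt t hf).inner ℝ hg

theorem inner_fderiv_gradient_apply [CompleteSpace E] {S : E → ℝ} {w : E}
    (hS : DifferentiableAt ℝ (fderiv ℝ S) w) (u v : E) :
    ⟪fderiv ℝ (gradient S) w u, v⟫ = fderiv ℝ (fderiv ℝ S) w u v := by
  -- over `ℝ` the conjugate-linear inverse Riesz map is linear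
  let L : StrongDual ℝ E →L[ℝ] E :=
    (toDual ℝ E).symm.toContinuousLinearEquiv.toContinuousLinearMap
  have hgrad : fderiv ℝ (gradient S) w = L.comp (fderiv ℝ (fderiv ℝ S) w) :=
    (L.hasFDerivAt.comp w hS.hasFDerivAt).fderiv
  rw [hgrad]
  exact toDual_symm_apply

theorem ContDiffAt.isSymmetric_fderiv_gradient [CompleteSpace E] {S : E → ℝ} {w : E}
    (hS : ContDiffAt ℝ 2 S w) : (fderiv ℝ (gradient S) w : E →ₗ[ℝ] E).IsSymmetric := by
  have hS' : DifferentiableAt ℝ (fderiv ℝ S) w :=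
    (hS.fderiv_right (m := 1) le_rfl).differentiableAt one_ne_zero
  intro u v
  rw [ContinuousLinearMap.coe_coe, inner_fderiv_gradient_apply hS', real_inner_comm,
    inner_fderiv_gradient_apply hS']
  exact (hS.isSymmSndFDerivAt (by simp [minSmoothness_of_isRCLikeNormedField])).eq u v

theorem inner_add_inner_eq_zero_of_skew_of_isSymmetric {M K : E → E} {H : E →ₗ[ℝ] E}
    (hM : ∀ u v, ⟪M u, v⟫ = -⟪u, M v⟫) (hK : ∀ u v, ⟪K u, v⟫ = -⟪u, K v⟫) (hH : H.IsSymmetric)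
    {u₁ u₂ a₁ a₂ b₁ b₂ : E} (h₁ : M a₁ + K b₁ = H u₁) (h₂ : M a₂ + K b₂ = H u₂) :
    ⟪M u₁, a₂⟫ + ⟪M a₁, u₂⟫ + (⟪K u₁, b₂⟫ + ⟪K b₁, u₂⟫) = 0 := by
  have h₁' : ⟪M a₁, u₂⟫ + ⟪K b₁, u₂⟫ = ⟪H u₁, u₂⟫ := by rw [← h₁, inner_add_left]
  have h₂' : ⟪u₁, M a₂⟫ + ⟪u₁, K b₂⟫ = ⟪u₁, H u₂⟫ := by rw [← h₂, inner_add_right]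
  rw [hM, hK]
  linarith [hH u₁ u₂]

end InnerProductSpace

theorem Matrix.inner_toEuclideanLin_of_transpose_eq_neg {ι : Type*} [Fintype ι] [DecidableEq ι]
    {A : Matrix ι ι ℝ} (hA : Aᵀ = -A) (u v : EuclideanSpace ℝ ι) :
    ⟪toEuclideanLin A u, v⟫ = -⟪u, toEuclideanLin A v⟫ := by
  rw [← LinearMap.adjoint_inner_right, ← toEuclideanLin_conjTranspose_eq_adjoint,
    conjTranspose_eq_transpose_of_trivial, hA, map_neg, LinearMap.neg_apply, inner_neg_right]

theorem stmt2_general (n : ℕ)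
    (M K : Matrix (Fin n) (Fin n) ℝ)
    (hM : Mᵀ = -M) (hK : Kᵀ = -K)
    (S : EuclideanSpace ℝ (Fin n) → ℝ) (hS : ContDiff ℝ 2 S)
    (z : ℝ → ℝ → EuclideanSpace ℝ (Fin n))
    (ζ₁ ζ₂ : ℝ → ℝ → EuclideanSpace ℝ (Fin n))
    (hζ₁smooth : ContDiff ℝ 1 (Function.uncurry ζ₁))
    (hζ₂smooth : ContDiff ℝ 1 (Function.uncurry ζ₂))
    (hζ₁ : ∀ x t : ℝ,
      (WithLp.toLp 2 (M.mulVec (deriv (fun s => ζ₁ x s) t)) : EuclideanSpace ℝ (Fin n))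
        + (WithLp.toLp 2 (K.mulVec (deriv (fun y => ζ₁ y t) x)) : EuclideanSpace ℝ (Fin n))
        = fderiv ℝ (gradient S) (z x t) (ζ₁ x t))
    (hζ₂ : ∀ x t : ℝ,
      (WithLp.toLp 2 (M.mulVec (deriv (fun s => ζ₂ x s) t)) : EuclideanSpace ℝ (Fin n))
        + (WithLp.toLp 2 (K.mulVec (deriv (fun y => ζ₂ y t) x)) : EuclideanSpace ℝ (Fin n))
        = fderiv ℝ (gradient S) (z x t) (ζ₂ x t)) :
    ∀ x t : ℝ,
      deriv (fun s => ⟪(show EuclideanSpace ℝ (Fin n) from WithLp.toLp 2 (M.mulVec (ζ₁ x s))), ζ₂ x s⟫) t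
        + deriv (fun y => ⟪(show EuclideanSpace ℝ (Fin n) from WithLp.toLp 2 (K.mulVec (ζ₁ y t))), ζ₂ y t⟫) x = 0 := by
  intro x t
  have hd₁ := hζ₁smooth.differentiable one_ne_zero
  have hd₂ := hζ₂smooth.differentiable one_ne_zero
  have ht₁ := hd₁.differentiableAt_uncurry_right x t
  have hx₁ := hd₁.differentiableAt_uncurry_left x t
  have ht₂ := hd₂.differentiableAt_uncurry_right x t
  have hx₂ := hd₂.differentiableAt_uncurry_left x t
  have h₁ := hζ₁ x t
  have h₂ := hζ₂ x t
  rw [deriv_ofLp ht₁, deriv_ofLp hx₁] at h₁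
  rw [deriv_ofLp ht₂, deriv_ofLp hx₂] at h₂
  simp only [← toEuclideanCLM_toLp, WithLp.toLp_ofLp]
  rw [(ht₁.hasDerivAt.inner_clm_apply _ ht₂.hasDerivAt).deriv,
    (hx₁.hasDerivAt.inner_clm_apply _ hx₂.hasDerivAt).deriv]
  exact inner_add_inner_eq_zero_of_skew_of_isSymmetric (M := toEuclideanLin M)
    (K := toEuclideanLin K) (inner_toEuclideanLin_of_transpose_eq_neg hM)
    (inner_toEuclideanLin_of_transpose_eq_neg hK) hS.contDiffAt.isSymmetric_fderiv_gradient h₁ h₂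

/-- **Multi-symplectic conservation law for Hamiltonian PDEs.**
If `ζ¹, ζ²` solve the variational equation `M ∂ₜζ + K ∂ₓζ = ∇²S(z) ζ` along a continuous
function `z`, where `∇²S` is the Hessian (the derivative of the gradient) of a `C²` function
`S`, then `∂ₜ⟨M ζ¹, ζ²⟩ + ∂ₓ⟨K ζ¹, ζ²⟩ = 0`. -/
theorem stmt2 (n : ℕ) (hn : 1 ≤ n)
    (M K : Matrix (Fin n) (Fin n) ℝ)
    (hM : Mᵀ = -M) (hK : Kᵀ = -K)
    (S : EuclideanSpace ℝ (Fin n) → ℝ) (hS : ContDiff ℝ 2 S)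
    (z : ℝ → ℝ → EuclideanSpace ℝ (Fin n))
    (hz : Continuous (Function.uncurry z))
    (ζ₁ ζ₂ : ℝ → ℝ → EuclideanSpace ℝ (Fin n))
    (hζ₁smooth : ContDiff ℝ 1 (Function.uncurry ζ₁))
    (hζ₂smooth : ContDiff ℝ 1 (Function.uncurry ζ₂))
    (hζ₁ : ∀ x t : ℝ,
      (WithLp.toLp 2 (M.mulVec (deriv (fun s => ζ₁ x s) t)) : EuclideanSpace ℝ (Fin n))
        + (WithLp.toLp 2 (K.mulVec (deriv (fun y => ζ₁ y t) x)) : EuclideanSpace ℝ (Fin n))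
        = fderiv ℝ (gradient S) (z x t) (ζ₁ x t))
    (hζ₂ : ∀ x t : ℝ,
      (WithLp.toLp 2 (M.mulVec (deriv (fun s => ζ₂ x s) t)) : EuclideanSpace ℝ (Fin n))
        + (WithLp.toLp 2 (K.mulVec (deriv (fun y => ζ₂ y t) x)) : EuclideanSpace ℝ (Fin n))
        = fderiv ℝ (gradient S) (z x t) (ζ₂ x t)) :
    ∀ x t : ℝ,
      deriv (fun s => ⟪(show EuclideanSpace ℝ (Fin n) from WithLp.toLp 2 (M.mulVec (ζ₁ x s))), ζ₂ x s⟫) t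
        + deriv (fun y => ⟪(show EuclideanSpace ℝ (Fin n) from WithLp.toLp 2 (K.mulVec (ζ₁ y t))), ζ₂ y t⟫) x = 0 :=
  stmt2_general n M K hM hK S hS z ζ₁ ζ₂ hζ₁smooth hζ₂smooth hζ₁ hζ₂
end

section
/- Let s, r ≥ 1. Let A ∈ ℝ^{s×s}, b ∈ ℝˢ and Ã ∈ ℝ^{r×r}, b̃ ∈ ℝʳ be the coefficients of two Runge-Kutta methods satisfying the multi-symplecticity conditions B A + Aᵀ B − b bᵀ = 0 and B̃ Ã + Ãᵀ B̃ − b̃ b̃ᵀ = 0, where B = diag(b) and B̃ = diag(b̃) are invertible. Let W ∈ ℝ^{s×s} and W̃ ∈ ℝ^{r×r} be invertible, and let V ∈ ℝ^{s×s} and Ṽ ∈ ℝ^{r×r} be skew-symmetric. Then for every α ∈ ℝ, the perturbed coefficient matrices A(α) = A + α (Wᵀ B)⁻¹ V W⁻¹ and Ã(α) = Ã + α (W̃ᵀ B̃)⁻¹ Ṽ W̃⁻¹ again satisfy B A(α) + A(α)ᵀ B − b bᵀ = 0 and B̃ Ã(α) + Ã(α)ᵀ B̃ − b̃ b̃ᵀ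 = 0; that is, the concatenated α-Runge-Kutta method is multi-symplectic for every α. -/
open Matrix

lemma aux_pert {n : ℕ} (B W V : Matrix (Fin n) (Fin n) ℝ)
    (hBsymm : Bᵀ = B) (hBinv : IsUnit B.det)
    (hV : Vᵀ = -V) :
    B * ((Wᵀ * B)⁻¹ * V * W⁻¹) + ((Wᵀ * B)⁻¹ * V * W⁻¹)ᵀ * B = 0 := by
  have h1 : (Wᵀ * B)⁻¹ = B⁻¹ * (Wᵀ)⁻¹ := Matrix.mul_inv_rev _ _
  have hBP : B * ((Wᵀ * B)⁻¹ * V * W⁻¹) = (Wᵀ)⁻¹ * V * W⁻¹ := by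
    rw [h1]
    calc B * (B⁻¹ * (Wᵀ)⁻¹ * V * W⁻¹) = (B * B⁻¹) * ((Wᵀ)⁻¹ * V * W⁻¹) := by
          simp only [Matrix.mul_assoc]
      _ = (Wᵀ)⁻¹ * V * W⁻¹ := by rw [Matrix.mul_nonsing_inv _ hBinv, one_mul, mul_assoc]
  have hPB : ((Wᵀ * B)⁻¹ * V * W⁻¹)ᵀ * B = -((Wᵀ)⁻¹ * V * W⁻¹) := by
    have h2 : (B * ((Wᵀ * B)⁻¹ * V * W⁻¹))ᵀ = ((Wᵀ * B)⁻¹ * V * W⁻¹)ᵀ * B := by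
      rw [Matrix.transpose_mul, hBsymm]
    rw [← h2, hBP, Matrix.transpose_mul, Matrix.transpose_mul, hV,
      Matrix.transpose_nonsing_inv, Matrix.transpose_nonsing_inv, Matrix.transpose_transpose]
    simp [Matrix.mul_assoc]
  rw [hBP, hPB]; abel

lemma aux_main {n : ℕ} (A B W V : Matrix (Fin n) (Fin n) ℝ) (b : Fin n → ℝ)
    (hB : B = Matrix.diagonal b) (hBinv : IsUnit B.det)
    (hsymp : B * A + Aᵀ * B - Matrix.vecMulVec b b = 0)
    (hV : Vᵀ = -V) (α : ℝ) :
    B * (A + α • ((Wᵀ * B)⁻¹ * V * W⁻¹))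
      + (A + α • ((Wᵀ * B)⁻¹ * V * W⁻¹))ᵀ * B - Matrix.vecMulVec b b = 0 := by
  have hBsymm : Bᵀ = B := by rw [hB]; exact Matrix.diagonal_transpose b
  have hp := aux_pert B W V hBsymm hBinv hV
  set P := (Wᵀ * B)⁻¹ * V * W⁻¹ with hP
  have key : B * (A + α • P) + (A + α • P)ᵀ * B - Matrix.vecMulVec b b
      = (B * A + Aᵀ * B - Matrix.vecMulVec b b) + α • (B * P + Pᵀ * B) := by
    rw [Matrix.transpose_add, Matrix.transpose_smul, Matrix.mul_add, Matrix.add_mul,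
      Matrix.mul_smul, Matrix.smul_mul, smul_add]
    abel
  rw [key, hsymp, hp, smul_zero, add_zero]

/-- **Multi-symplecticity of the concatenated α-Runge-Kutta method for all α.**
If the pair of Runge-Kutta methods `(A, b)`, `(Ã, b̃)` satisfies the multi-symplecticity
conditions `BA + AᵀB − bbᵀ = 0`, `B̃Ã + ÃᵀB̃ − b̃b̃ᵀ = 0`, then for every `α ∈ ℝ` the
perturbed coefficients `A(α) = A + α(WᵀB)⁻¹VW⁻¹`, `Ã(α) = Ã + α(W̃ᵀB̃)⁻¹ṼW̃⁻¹`
(with `W`, `W̃` invertible and `V`, `Ṽ` skew-symmetric) again satisfy them. -/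
theorem stmt12 (s r : ℕ) (hs : 0 < s) (hr : 0 < r)
    (A : Matrix (Fin s) (Fin s) ℝ) (b : Fin s → ℝ)
    (At : Matrix (Fin r) (Fin r) ℝ) (bt : Fin r → ℝ)
    (B : Matrix (Fin s) (Fin s) ℝ) (hB : B = Matrix.diagonal b)
    (Bt : Matrix (Fin r) (Fin r) ℝ) (hBt : Bt = Matrix.diagonal bt)
    (hBinv : IsUnit B.det) (hBtinv : IsUnit Bt.det)
    (hsymp : B * A + Aᵀ * B - Matrix.vecMulVec b b = 0)
    (hsympt : Bt * At + Atᵀ * Bt - Matrix.vecMulVec bt bt = 0)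
    (W : Matrix (Fin s) (Fin s) ℝ) (hWinv : IsUnit W.det)
    (Wt : Matrix (Fin r) (Fin r) ℝ) (hWtinv : IsUnit Wt.det)
    (V : Matrix (Fin s) (Fin s) ℝ) (hV : Vᵀ = -V)
    (Vt : Matrix (Fin r) (Fin r) ℝ) (hVt : Vtᵀ = -Vt) :
    ∀ α : ℝ,
      B * (A + α • ((Wᵀ * B)⁻¹ * V * W⁻¹))
          + (A + α • ((Wᵀ * B)⁻¹ * V * W⁻¹))ᵀ * B - Matrix.vecMulVec b b = 0
      ∧ Bt * (At + α • ((Wtᵀ * Bt)⁻¹ * Vt * Wt⁻¹))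
          + (At + α • ((Wtᵀ * Bt)⁻¹ * Vt * Wt⁻¹))ᵀ * Bt - Matrix.vecMulVec bt bt = 0 := by
  intro α
  exact ⟨aux_main A B W V b hB hBinv hsymp hV α,
    aux_main At Bt Wt Vt bt hBt hBtinv hsympt hVt α⟩
end

section
/- Let m, d be integers with 1 ≤ m ≤ d, and let g : ℝ² → ℝ be real-analytic on a neighborhood of the origin with convergent power series g(α, τ) = Σ_{i,k ≥ 0} a_{ik} α^i τ^k. Assume: (a) a_{0k} = 0 for all k < d and a_{0d} ≠ 0; (b) a_{ik} = 0 for all i ≥ 1 and k < d − m, and a_{1,d−m} ≠ 0. Then there exist ε > 0 and a real-analytic function η : (−ε, ε) → ℝ with η(0) = −a_{0d}/a_{1,d−m} such that g(η(τ) τ^m, τ) = 0 for all |τ| < ε. In particular, the root α*(τ) := η(τ) τ^m satisfies α*(τ) = −(a_{0d}/a_{1,d−m}) τ^m + O(τ^{m+1}) as τ → 0. -/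
/-!
Substituting `α = β τ ^ m`, the vanishing of the coefficients below the weight `d` gives
`g (β τ ^ m) τ = τ ^ d h (τ, β)` for a convergent double power series `h`, and at `τ = 0` only
the terms `a₀d + a₁,d₋ₘ β` of `h` survive. So `β₀ = -a₀d / a₁,d₋ₘ` is a simple zero of
`h (0, ·)`, and the analytic implicit function theorem (`ContDiffAt.implicitFunction` with
`n = ω`) gives the analytic branch `η` with `h (τ, η τ) = 0`. The `O(τ ^ (m + 1))` bound is the
differentiability of `η` at `0`.
-/

open scoped Topology
open Filter Asymptotics Set Finset

theorem HasSum.sum_antidiagonal {α : Type*} [AddCommMonoid α] [TopologicalSpace α]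
    [ContinuousAdd α] [RegularSpace α] {f : ℕ × ℕ → α} {a : α} (hf : HasSum f a) :
    HasSum (fun n => ∑ p ∈ antidiagonal n, f p) a := by
  refine ((Finset.HasAntidiagonal.sigmaAntidiagonalEquivProd.hasSum_iff).mpr hf).sigma
    fun n => ?_
  simpa [Finset.sum_attach] using hasSum_fintype fun p : antidiagonal n => f p

section DoublePowerSeries

variable {𝕜 : Type*} [NontriviallyNormedField 𝕜]

noncomputable def prodMonomial (n i : ℕ) :
    ContinuousMultilinearMap 𝕜 (fun _ : Fin n => 𝕜 × 𝕜) 𝕜 :=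
  (ContinuousMultilinearMap.mkPiAlgebra 𝕜 (Fin n) 𝕜).compContinuousLinearMap
    fun k => if (k : ℕ) < i then ContinuousLinearMap.fst 𝕜 𝕜 𝕜 else ContinuousLinearMap.snd 𝕜 𝕜 𝕜

theorem norm_prodMonomial_le (n i : ℕ) :
    ‖(prodMonomial n i : ContinuousMultilinearMap 𝕜 _ _)‖ ≤ 1 := by
  refine (ContinuousMultilinearMap.norm_compContinuousLinearMap_le _ _).trans ?_
  rw [ContinuousMultilinearMap.norm_mkPiAlgebra, one_mul]
  refine Finset.prod_le_one (fun _ _ => norm_nonneg _) fun k _ => ?_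
  split
  · exact ContinuousLinearMap.norm_fst_le 𝕜 𝕜 𝕜
  · exact ContinuousLinearMap.norm_snd_le 𝕜 𝕜 𝕜

theorem prodMonomial_apply_diag {n i : ℕ} (hi : i ≤ n) (y : 𝕜 × 𝕜) :
    prodMonomial n i (fun _ => y) = y.1 ^ i * y.2 ^ (n - i) := by
  simp only [prodMonomial, ContinuousMultilinearMap.compContinuousLinearMap_apply,
    ContinuousMultilinearMap.mkPiAlgebra_apply, apply_ite (fun L : 𝕜 × 𝕜 →L[𝕜] 𝕜 => L y),
    ContinuousLinearMap.coe_fst', ContinuousLinearMap.coe_snd']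
  rw [Fin.prod_univ_eq_prod_range (fun k => if k < i then y.1 else y.2),
    ← Finset.prod_range_mul_prod_Ico _ hi,
    Finset.prod_congr rfl fun k hk => if_pos (Finset.mem_range.mp hk),
    Finset.prod_congr rfl fun k hk => if_neg (Finset.mem_Ico.mp hk).1.not_gt]
  simp

noncomputable def doubleSeries (c : ℕ → ℕ → 𝕜) : FormalMultilinearSeries 𝕜 (𝕜 × 𝕜) 𝕜 :=
  fun n => ∑ i ∈ Finset.range (n + 1), c i (n - i) • prodMonomial n i

noncomputable def doublePowerSum (c : ℕ → ℕ → 𝕜) (x : 𝕜 × 𝕜) : 𝕜 :=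
  ∑' p : ℕ × ℕ, c p.1 p.2 * x.1 ^ p.1 * x.2 ^ p.2

theorem doubleSeries_apply_diag (c : ℕ → ℕ → 𝕜) (n : ℕ) (y : 𝕜 × 𝕜) :
    doubleSeries c n (fun _ => y) =
      ∑ p ∈ antidiagonal n, c p.1 p.2 * y.1 ^ p.1 * y.2 ^ p.2 := by
  rw [Finset.Nat.sum_antidiagonal_eq_sum_range_succ_mk, doubleSeries, _root_.sum_apply]
  refine Finset.sum_congr rfl fun i hi => ?_
  rw [smul_apply, prodMonomial_apply_diag (Nat.lt_succ_iff.mp (Finset.mem_range.mp hi)),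
    smul_eq_mul, mul_assoc]

theorem norm_doubleSeries_le {c : ℕ → ℕ → 𝕜} (hc : Summable fun p : ℕ × ℕ => ‖c p.1 p.2‖)
    (n : ℕ) : ‖doubleSeries c n‖ ≤ ∑' p : ℕ × ℕ, ‖c p.1 p.2‖ :=
  calc ‖doubleSeries c n‖ ≤ ∑ i ∈ Finset.range (n + 1), ‖c i (n - i)‖ := by
        refine (norm_sum_le _ _).trans (Finset.sum_le_sum fun i _ => ?_)
        rw [norm_smul]
        exact mul_le_of_le_one_right (norm_nonneg _) (norm_prodMonomial_le n i)
    _ = ∑ p ∈ antidiagonal n, ‖c p.1 p.2‖ :=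
        (Nat.sum_antidiagonal_eq_sum_range_succ_mk (fun p => ‖c p.1 p.2‖) n).symm
    _ ≤ ∑' p : ℕ × ℕ, ‖c p.1 p.2‖ := hc.sum_le_tsum _ fun _ _ => norm_nonneg _

theorem summable_doublePowerSum_terms [CompleteSpace 𝕜] {c : ℕ → ℕ → 𝕜} {r s : 𝕜}
    (hc : Summable fun p : ℕ × ℕ => ‖c p.1 p.2 * r ^ p.1 * s ^ p.2‖) {x : 𝕜 × 𝕜}
    (hx₁ : ‖x.1‖ ≤ ‖r‖) (hx₂ : ‖x.2‖ ≤ ‖s‖) :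
    Summable fun p : ℕ × ℕ => c p.1 p.2 * x.1 ^ p.1 * x.2 ^ p.2 := by
  refine Summable.of_norm_bounded hc fun p => ?_
  simp only [norm_mul, norm_pow]
  gcongr

theorem hasFPowerSeriesOnBall_doublePowerSum [CompleteSpace 𝕜] {c : ℕ → ℕ → 𝕜}
    (hc : Summable fun p : ℕ × ℕ => ‖c p.1 p.2‖) :
    HasFPowerSeriesOnBall (doublePowerSum c) (doubleSeries c) 0 1 where
  r_le := by
    simpa using (doubleSeries c).le_radius_of_bound (r := 1) _ fun n => by
      simpa using norm_doubleSeries_le hc n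
  r_pos := one_pos
  hasSum {y} hy := by
    have hy' : ‖y‖ < 1 := by
      rwa [Metric.mem_eball, edist_zero_right, ← ofReal_norm, ENNReal.ofReal_lt_one] at hy
    have hsum := summable_doublePowerSum_terms (r := (1 : 𝕜)) (s := (1 : 𝕜)) (by simpa using hc)
      (by simpa using (norm_fst_le y).trans hy'.le) (by simpa using (norm_snd_le y).trans hy'.le)
    simpa only [zero_add, doubleSeries_apply_diag, doublePowerSum] using
      hsum.hasSum.sum_antidiagonal

theorem doublePowerSum_rescale {r s : 𝕜} (hr : r ≠ 0) (hs : s ≠ 0) (c : ℕ → ℕ → 𝕜) :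
    doublePowerSum c = fun x => doublePowerSum (fun i j => c i j * r ^ i * s ^ j)
      (r⁻¹ * x.1, s⁻¹ * x.2) := by
  ext x
  refine tsum_congr fun p => ?_
  simp only [mul_pow, inv_pow]
  field_simp

theorem analyticOnNhd_doublePowerSum [CompleteSpace 𝕜] {c : ℕ → ℕ → 𝕜} {r s : 𝕜}
    (hr : r ≠ 0) (hs : s ≠ 0) (hc : Summable fun p : ℕ × ℕ => ‖c p.1 p.2 * r ^ p.1 * s ^ p.2‖) :
    AnalyticOnNhd 𝕜 (doublePowerSum c) {x | ‖x.1‖ < ‖r‖ ∧ ‖x.2‖ < ‖s‖} := by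
  rintro x ⟨hx₁, hx₂⟩
  have hL : AnalyticAt 𝕜 (fun x : 𝕜 × 𝕜 => (r⁻¹ * x.1, s⁻¹ * x.2)) x :=
    (analyticAt_const.mul analyticAt_fst).prod (analyticAt_const.mul analyticAt_snd)
  have hmem : ((r⁻¹ * x.1, s⁻¹ * x.2) : 𝕜 × 𝕜) ∈ Metric.eball 0 1 := by
    have : ‖((r⁻¹ * x.1, s⁻¹ * x.2) : 𝕜 × 𝕜)‖ < 1 := by
      rw [Prod.norm_def, max_lt_iff, norm_mul, norm_mul, norm_inv, norm_inv,
        inv_mul_lt_one₀ (norm_pos_iff.mpr hr), inv_mul_lt_one₀ (norm_pos_iff.mpr hs)]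
      exact ⟨hx₁, hx₂⟩
    rwa [Metric.mem_eball, edist_zero_right, ← ofReal_norm, ENNReal.ofReal_lt_one]
  have hP := hasFPowerSeriesOnBall_doublePowerSum (c := fun i j => c i j * r ^ i * s ^ j) hc
  rw [doublePowerSum_rescale hr hs]
  exact AnalyticAt.comp (f := fun x : 𝕜 × 𝕜 => (r⁻¹ * x.1, s⁻¹ * x.2))
    (hP.analyticAt_of_mem hmem) hL

theorem doublePowerSum_zero_fst {c : ℕ → ℕ → 𝕜} (hc : ∀ i, 2 ≤ i → c 0 i = 0) (y : 𝕜) :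
    doublePowerSum c (0, y) = c 0 0 + c 0 1 * y := by
  refine (hasSum_sum_of_ne_finset_zero (s := {(0, 0), (0, 1)}) fun p hp => ?_).tsum_eq.trans ?_
  · obtain ⟨_ | j, i⟩ := p
    · have hi : 2 ≤ i := by
        simp only [Finset.mem_insert, Finset.mem_singleton, Prod.mk.injEq, true_and] at hp
        omega
      simp [hc i hi]
    · simp
  · simp [Finset.sum_pair (by simp : ((0, 0) : ℕ × ℕ) ≠ (0, 1))]

end DoublePowerSeries

theorem isInvertible_fderiv_comp_inr {𝕜 E : Type*} [NontriviallyNormedField 𝕜]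
    [NormedAddCommGroup E] [NormedSpace 𝕜 E] {f : E × 𝕜 → 𝕜} {u : E × 𝕜} {A : 𝕜}
    (hf : DifferentiableAt 𝕜 f u) (hA : HasDerivAt (fun y => f (u.1, y)) A u.2) (hA₀ : A ≠ 0) :
    (fderiv 𝕜 f u ∘L .inr 𝕜 E 𝕜).IsInvertible := by
  have hinr : fderiv 𝕜 f u ∘L .inr 𝕜 E 𝕜 = .smulRight 1 A :=
    (hf.hasFDerivAt.comp u.2 (hasFDerivAt_prodMk_right u.1 u.2)).unique hA.hasFDerivAt
  rw [hinr]
  exact ⟨ContinuousLinearEquiv.unitsEquivAut 𝕜 (Units.mk0 A hA₀), by ext; simp⟩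

open scoped ContDiff in
theorem exists_eventually_doublePowerSum_eq_zero {𝕜 : Type*} [RCLike 𝕜] {c : ℕ → ℕ → 𝕜}
    {r s : 𝕜} (hr : r ≠ 0) (hs : s ≠ 0)
    (hc : Summable fun p : ℕ × ℕ => ‖c p.1 p.2 * r ^ p.1 * s ^ p.2‖)
    (hc₀ : ∀ i, 2 ≤ i → c 0 i = 0) (hc₁ : c 0 1 ≠ 0) (hβ : ‖c 0 0 / c 0 1‖ < ‖s‖) :
    ∃ η : 𝕜 → 𝕜, η 0 = -(c 0 0 / c 0 1) ∧
      ∀ᶠ τ in 𝓝 0, AnalyticAt 𝕜 η τ ∧ ‖η τ‖ < ‖s‖ ∧ doublePowerSum c (τ, η τ) = 0 := by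
  set β₀ := -(c 0 0 / c 0 1) with hβ₀
  have hβ₀s : ‖β₀‖ < ‖s‖ := by rwa [hβ₀, norm_neg]
  have hana : AnalyticAt 𝕜 (doublePowerSum c) (0, β₀) :=
    analyticOnNhd_doublePowerSum hr hs hc _ ⟨by simpa using hr, hβ₀s⟩
  have hline : HasDerivAt (fun y => doublePowerSum c (0, y)) (c 0 1) β₀ := by
    simp only [doublePowerSum_zero_fst hc₀]
    simpa using ((hasDerivAt_id β₀).const_mul (c 0 1)).const_add (c 0 0)
  have hzero : doublePowerSum c (0, β₀) = 0 := by
    rw [doublePowerSum_zero_fst hc₀, hβ₀]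
    field_simp
    ring
  have hcd : ContDiffAt 𝕜 ω (doublePowerSum c) (0, β₀) := hana.contDiffAt
  have hinv := isInvertible_fderiv_comp_inr hana.differentiableAt hline hc₁
  have hη₀ := hcd.implicitFunction_apply_self (by simp) hinv
  have hη := (hcd.contDiffAt_implicitFunction (by simp) hinv).analyticAt
  refine ⟨_, hη₀, ?_⟩
  filter_upwards [hη.eventually_analyticAt,
    hη.continuousAt.norm.eventually_lt continuousAt_const (by rwa [hη₀]),
    hcd.eventually_apply_implicitFunction (by simp) hinv] with τ hτ₁ hτ₂ hτ₃
  exact ⟨hτ₁, hτ₂, hτ₃.trans hzero⟩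

theorem isBigO_mul_pow_sub {𝕜 : Type*} [NontriviallyNormedField 𝕜] {η : 𝕜 → 𝕜}
    (hη : DifferentiableAt 𝕜 η 0) (m : ℕ) :
    (fun τ => η τ * τ ^ m - η 0 * τ ^ m) =O[𝓝 0] fun τ => τ ^ (m + 1) :=
  (hη.hasFDerivAt.isBigO_sub.mul (isBigO_refl (fun τ : 𝕜 => τ ^ m) (𝓝 0))).congr
    (fun τ => by ring) (fun τ => by ring)

theorem exists_pos_lt_and_mul_pow_lt {ρ : ℝ} (hρ : 0 < ρ) (s : ℝ) {m : ℕ} (hm : m ≠ 0) :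
    ∃ t, 0 < t ∧ t < ρ ∧ s * t ^ m < ρ := by
  have hlim : Tendsto (fun t : ℝ => s * t ^ m) (𝓝 0) (𝓝 0) := by
    simpa [zero_pow hm] using ((continuous_pow m).const_mul s).tendsto 0
  have hsmall := (eventually_lt_nhds hρ).and (hlim.eventually (eventually_lt_nhds hρ))
  obtain ⟨t, ⟨htρ, hst⟩, ht⟩ :=
    ((hsmall.filter_mono nhdsWithin_le_nhds).and (self_mem_nhdsWithin (s := Ioi 0))).exists
  exact ⟨t, ht, htρ, hst⟩

/-- The coefficient of `τ ^ j β ^ i` in `τ ^ (-d) Σ a i k (β τ ^ m) ^ i τ ^ k`. -/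
def rootCoeff (a : ℕ → ℕ → ℝ) (m d j i : ℕ) : ℝ :=
  if i * m ≤ d + j then a i (d + j - i * m) else 0

theorem hasSum_rescaled_iff {a : ℕ → ℕ → ℝ} {m d : ℕ} (ha : ∀ i k, i * m + k < d → a i k = 0)
    (β τ S : ℝ) :
    HasSum (fun p : ℕ × ℕ => a p.1 p.2 * (β * τ ^ m) ^ p.1 * τ ^ p.2) S ↔
      HasSum (fun p : ℕ × ℕ => τ ^ d * (rootCoeff a m d p.1 p.2 * τ ^ p.1 * β ^ p.2)) S := by
  -- Both series are reindexings of this one, graded by the total power `n` of `τ`.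
  set w : ℕ × ℕ → ℝ := fun q =>
    if q.1 * m ≤ q.2 then a q.1 (q.2 - q.1 * m) * β ^ q.1 * τ ^ q.2 else 0
  have hw₁ : w ∘ (fun p => (p.1, p.1 * m + p.2)) =
      fun p : ℕ × ℕ => a p.1 p.2 * (β * τ ^ m) ^ p.1 * τ ^ p.2 := by
    ext ⟨i, k⟩
    simp only [w, Function.comp_apply, Nat.le_add_right, if_true, Nat.add_sub_cancel_left]
    ring
  have hw₂ : w ∘ (fun p => (p.2, d + p.1)) =
      fun p : ℕ × ℕ => τ ^ d * (rootCoeff a m d p.1 p.2 * τ ^ p.1 * β ^ p.2) := by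
    ext ⟨j, i⟩
    simp only [w, rootCoeff, Function.comp_apply]
    split_ifs <;> ring
  have hinj₁ : Function.Injective fun p : ℕ × ℕ => (p.1, p.1 * m + p.2) := by
    rintro ⟨i, k⟩ ⟨i', k'⟩ h
    simp only [Prod.mk.injEq] at h
    obtain ⟨rfl, h⟩ := h
    simp only [Prod.mk.injEq, true_and]
    omega
  have hinj₂ : Function.Injective fun p : ℕ × ℕ => (p.2, d + p.1) := by
    rintro ⟨j, i⟩ ⟨j', i'⟩ h
    simp only [Prod.mk.injEq] at h
    simp only [Prod.mk.injEq]
    omega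
  rw [← hw₁, ← hw₂, hinj₁.hasSum_iff, hinj₂.hasSum_iff]
  · rintro ⟨i, n⟩ hq
    simp only [w]
    split_ifs with h
    · rw [ha i _ (by by_contra! h'; exact hq ⟨(n - d, i), by simp; omega⟩)]
      ring
    · rfl
  · rintro ⟨i, n⟩ hq
    simp only [w]
    rw [if_neg fun h => hq ⟨(i, n - i * m), by simp; omega⟩]

section RootCoeff

variable {a : ℕ → ℕ → ℝ} {m d : ℕ}

theorem coeff_eq_zero_of_weight_lt (ha0 : ∀ k, k < d → a 0 k = 0)
    (hai : ∀ i k, 1 ≤ i → k < d - m → a i k = 0) : ∀ i k, i * m + k < d → a i k = 0 := by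
  rintro (_ | i) k h
  · exact ha0 k (by simpa using h)
  · have : m ≤ (i + 1) * m := Nat.le_mul_of_pos_left m i.succ_pos
    exact hai _ _ i.succ_pos (by omega)

theorem rootCoeff_zero_zero : rootCoeff a m d 0 0 = a 0 d := by
  simp [rootCoeff]

theorem rootCoeff_zero_one (hmd : m ≤ d) : rootCoeff a m d 0 1 = a 1 (d - m) := by
  simp [rootCoeff, hmd]

theorem rootCoeff_zero_of_two_le (hm : 1 ≤ m) (hai : ∀ i k, 1 ≤ i → k < d - m → a i k = 0)
    {i : ℕ} (hi : 2 ≤ i) : rootCoeff a m d 0 i = 0 := by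
  have : m < i * m := (Nat.lt_mul_iff_one_lt_left hm).mpr hi
  simp only [rootCoeff, add_zero]
  split_ifs with h
  · exact hai _ _ (by omega) (by omega)
  · rfl

theorem rootCoeff_abs (j i : ℕ) :
    rootCoeff (fun i k => |a i k|) m d j i = |rootCoeff a m d j i| := by
  simp only [rootCoeff]
  split_ifs <;> simp

theorem summable_norm_rootCoeff (ha : ∀ i k, i * m + k < d → a i k = 0) {s t : ℝ}
    (hs : 0 < s) (ht : 0 < t)
    (h : Summable fun p : ℕ × ℕ => a p.1 p.2 * (s * t ^ m) ^ p.1 * t ^ p.2) :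
    Summable fun p : ℕ × ℕ => ‖rootCoeff a m d p.1 p.2 * t ^ p.1 * s ^ p.2‖ := by
  have habs : ∀ i k, i * m + k < d → |a i k| = 0 := fun i k hik => by simp [ha i k hik]
  have h' : Summable fun p : ℕ × ℕ => |a p.1 p.2| * (s * t ^ m) ^ p.1 * t ^ p.2 :=
    h.abs.congr fun p => by
      rw [abs_mul, abs_mul, abs_pow, abs_pow, abs_of_pos (by positivity : 0 < s * t ^ m),
        abs_of_pos ht]
  obtain ⟨S, hS⟩ := h'
  have := ((hasSum_rescaled_iff habs s t S).mp hS).summable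
  rw [summable_mul_left_iff (pow_ne_zero d ht.ne')] at this
  refine this.congr fun p => ?_
  rw [rootCoeff_abs, Real.norm_eq_abs, abs_mul, abs_mul, abs_pow, abs_pow, abs_of_pos ht,
    abs_of_pos hs]

theorem hasSum_pow_mul_doublePowerSum_rootCoeff (ha : ∀ i k, i * m + k < d → a i k = 0)
    {β τ : ℝ} (h : Summable fun p : ℕ × ℕ => rootCoeff a m d p.1 p.2 * τ ^ p.1 * β ^ p.2) :
    HasSum (fun p : ℕ × ℕ => a p.1 p.2 * (β * τ ^ m) ^ p.1 * τ ^ p.2)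
      (τ ^ d * doublePowerSum (rootCoeff a m d) (τ, β)) :=
  (hasSum_rescaled_iff ha β τ _).mpr (h.hasSum.mul_left _)

theorem eq_zero_of_doublePowerSum_rootCoeff_eq_zero (ha : ∀ i k, i * m + k < d → a i k = 0)
    {g : ℝ → ℝ → ℝ} {ρ s t : ℝ} (hg : ∀ α τ : ℝ, |α| < ρ → |τ| < ρ →
      HasSum (fun p : ℕ × ℕ => a p.1 p.2 * α ^ p.1 * τ ^ p.2) (g α τ))
    (htρ : t < ρ) (hstρ : s * t ^ m < ρ)
    (hsum : Summable fun p : ℕ × ℕ => ‖rootCoeff a m d p.1 p.2 * t ^ p.1 * s ^ p.2‖)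
    {β τ : ℝ} (hβ : |β| < s) (hτ : |τ| < t)
    (hzero : doublePowerSum (rootCoeff a m d) (τ, β) = 0) : g (β * τ ^ m) τ = 0 := by
  have hs : 0 < s := (abs_nonneg β).trans_lt hβ
  have ht : 0 < t := (abs_nonneg τ).trans_lt hτ
  have hα : |β * τ ^ m| < ρ := calc
    |β * τ ^ m| = |β| * |τ| ^ m := by rw [abs_mul, abs_pow]
    _ ≤ s * t ^ m := by gcongr
    _ < ρ := hstρ
  have hterms := summable_doublePowerSum_terms hsum (x := (τ, β))
    (by simpa [abs_of_pos ht] using hτ.le) (by simpa [abs_of_pos hs] using hβ.le)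
  rw [(hg _ _ hα (hτ.trans htρ)).unique (hasSum_pow_mul_doublePowerSum_rootCoeff ha hterms),
    hzero, mul_zero]

end RootCoeff

theorem stmt14_general (m d : ℕ) (hm : 1 ≤ m) (hmd : m ≤ d)
    (g : ℝ → ℝ → ℝ) (a : ℕ → ℕ → ℝ)
    (hconv : ∃ ρ > (0 : ℝ), ∀ α τ : ℝ, |α| < ρ → |τ| < ρ →
      HasSum (fun p : ℕ × ℕ => a p.1 p.2 * α ^ p.1 * τ ^ p.2) (g α τ))
    (ha0 : ∀ k : ℕ, k < d → a 0 k = 0)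
    (hai : ∀ i k : ℕ, 1 ≤ i → k < d - m → a i k = 0) (ha1 : a 1 (d - m) ≠ 0) :
    ∃ ε > (0 : ℝ), ∃ η : ℝ → ℝ,
      AnalyticOnNhd ℝ η (Set.Ioo (-ε) ε)
      ∧ η 0 = -(a 0 d / a 1 (d - m))
      ∧ (∀ τ : ℝ, |τ| < ε → g (η τ * τ ^ m) τ = 0)
      ∧ (fun τ : ℝ => η τ * τ ^ m - (-(a 0 d / a 1 (d - m))) * τ ^ m)
          =O[𝓝 0] fun τ : ℝ => τ ^ (m + 1) := by
  obtain ⟨ρ, hρ, hg⟩ := hconv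
  have ha := coeff_eq_zero_of_weight_lt ha0 hai
  set s := |a 0 d / a 1 (d - m)| + 1
  have hs : 0 < s := by positivity
  obtain ⟨t, ht, htρ, hstρ⟩ := exists_pos_lt_and_mul_pow_lt hρ s (by omega : m ≠ 0)
  have hsum := summable_norm_rootCoeff ha hs ht
    (hg _ _ (by rwa [abs_of_pos (by positivity)]) (by rwa [abs_of_pos ht])).summable
  obtain ⟨η, hη₀, hη⟩ := exists_eventually_doublePowerSum_eq_zero ht.ne' hs.ne' hsum
    (fun i => rootCoeff_zero_of_two_le hm hai) (by rwa [rootCoeff_zero_one hmd])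
    (by rw [rootCoeff_zero_zero, rootCoeff_zero_one hmd, Real.norm_eq_abs, Real.norm_eq_abs,
      abs_of_pos hs]; exact lt_add_one _)
  rw [rootCoeff_zero_zero, rootCoeff_zero_one hmd] at hη₀
  obtain ⟨ε, hε, hball⟩ := Metric.eventually_nhds_iff.mp (hη.and (Metric.ball_mem_nhds 0 ht))
  have hmem : ∀ τ, |τ| < ε → (AnalyticAt ℝ η τ ∧ |η τ| < s ∧
      doublePowerSum (rootCoeff a m d) (τ, η τ) = 0) ∧ |τ| < t := fun τ hτ => by
    simpa [abs_of_pos hs] using hball (by rwa [Real.dist_eq, sub_zero])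
  refine ⟨ε, hε, η, fun τ hτ => (hmem τ (abs_lt.mpr hτ)).1.1, hη₀, fun τ hτ => ?_, ?_⟩
  · obtain ⟨⟨-, hητ, hzero⟩, hτt⟩ := hmem τ hτ
    exact eq_zero_of_doublePowerSum_rootCoeff_eq_zero ha hg htρ hstρ hsum hητ hτt hzero
  · rw [← hη₀]
    exact isBigO_mul_pow_sub (hmem 0 (by simpa)).1.1.differentiableAt m

/-- **Existence of an analytic root branch `α*(τ) = η(τ)τᵐ` of an analytic function.**
Let `g(α,τ) = Σ a_{ik} αⁱτᵏ` be given by a power series convergent near the origin with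
`a_{0k} = 0` for `k < d`, `a_{0d} ≠ 0`, `a_{ik} = 0` for `i ≥ 1`, `k < d − m`, and
`a_{1,d−m} ≠ 0`. Then there is an analytic `η` on `(−ε,ε)` with `η(0) = −a_{0d}/a_{1,d−m}`
such that `g(η(τ)τᵐ, τ) = 0`; in particular
`α*(τ) = η(τ)τᵐ = −(a_{0d}/a_{1,d−m}) τᵐ + O(τ^{m+1})`. -/
theorem stmt14 (m d : ℕ) (hm : 1 ≤ m) (hmd : m ≤ d)
    (g : ℝ → ℝ → ℝ) (a : ℕ → ℕ → ℝ)
    (hconv : ∃ ρ > (0 : ℝ), ∀ α τ : ℝ, |α| < ρ → |τ| < ρ →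
      HasSum (fun p : ℕ × ℕ => a p.1 p.2 * α ^ p.1 * τ ^ p.2) (g α τ))
    (ha0 : ∀ k : ℕ, k < d → a 0 k = 0) (ha0d : a 0 d ≠ 0)
    (hai : ∀ i k : ℕ, 1 ≤ i → k < d - m → a i k = 0) (ha1 : a 1 (d - m) ≠ 0) :
    ∃ ε > (0 : ℝ), ∃ η : ℝ → ℝ,
      AnalyticOnNhd ℝ η (Set.Ioo (-ε) ε)
      ∧ η 0 = -(a 0 d / a 1 (d - m))
      ∧ (∀ τ : ℝ, |τ| < ε → g (η τ * τ ^ m) τ = 0)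
      ∧ (fun τ : ℝ => η τ * τ ^ m - (-(a 0 d / a 1 (d - m))) * τ ^ m)
          =O[𝓝 0] fun τ : ℝ => τ ^ (m + 1) :=
  stmt14_general m d hm hmd g a hconv ha0 hai ha1
end
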